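/- arXiv:1812.10159 — 5 statements merged into one kernel-verified Lean document; each statement's English description precedes it below -/
import Mathlib

section
/- If k is a field in which -1 has no square root, then the trigonometric coalgebra C_k admits no bialgebra structure (i.e., there is no algebra structure on C_k making it a bialgebra with the given coalgebra structure). -/
open TensorProduct

/-- basis vector `c` of the trigonometric coalgebra -/
def trigC (k : Type*) [Field k] : k × k := (1, 0)
/-- basis vector `s` of the trigonometric coalgebra -/
def trigS (k : Type*) [Field k] : k × k := (0, 1)

/-- comultiplication of the trigonometric coalgebra:
`Δ(c) = c⊗c - s⊗s`, `Δ(s) = s⊗c + c⊗s`. -/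
noncomputable def trigComul (k : Type*) [Field k] :
    (k × k) →ₗ[k] (k × k) ⊗[k] (k × k) :=
  (LinearMap.fst k k k).smulRight (trigC k ⊗ₜ trigC k - trigS k ⊗ₜ trigS k) +
  (LinearMap.snd k k k).smulRight (trigS k ⊗ₜ trigC k + trigC k ⊗ₜ trigS k)

/-- counit of the trigonometric coalgebra: `ε(c) = 1`, `ε(s) = 0`. -/
def trigCounit (k : Type*) [Field k] : (k × k) →ₗ[k] k := LinearMap.fst k k k

/-- A bialgebra structure on a fixed `k`-coalgebra `(V, Δ, ε)`: an associative
unital `k`-bilinear multiplication for which `Δ` and `ε` are algebra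
homomorphisms (the multiplication on `V ⊗ V` being the componentwise one). -/
structure BialgebraStructure (k V : Type*) [CommRing k] [AddCommGroup V] [Module k V]
    (Δ : V →ₗ[k] V ⊗[k] V) (ε : V →ₗ[k] k) where
  mul : V →ₗ[k] V →ₗ[k] V
  one : V
  mul_assoc : ∀ x y z : V, mul (mul x y) z = mul x (mul y z)
  one_mul : ∀ x : V, mul one x = x
  mul_one : ∀ x : V, mul x one = x
  comul_one : Δ one = one ⊗ₜ[k] one
  comul_mul : ∀ x y : V, Δ (mul x y) = TensorProduct.map₂ mul mul (Δ x) (Δ y)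
  counit_one : ε one = 1
  counit_mul : ∀ x y : V, ε (mul x y) = ε x * ε y

/-- If `-1` is not a square in `k`, the trigonometric coalgebra admits no
bialgebra structure. -/
theorem trig_no_bialgebra (k : Type*) [Field k] (h : ¬ ∃ i : k, i ^ 2 = -1) :
    IsEmpty (BialgebraStructure k (k × k) (trigComul k) (trigCounit k)) := by
  constructor
  intro B
  apply h
  refine ⟨B.one.2, ?_⟩
  have ha : B.one.1 = 1 := B.counit_one
  have hc := congrArg (TensorProduct.lift ((LinearMap.snd k k k).smulRight (LinearMap.snd k k k))) B.comul_one
  simp [trigComul, trigC, trigS, ha] at hc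
  rw [sq]
  exact hc.symm
end

section
/- If k has characteristic 2, the trigonometric coalgebra C_k has exactly one grouplike element, namely c + s. -/
open TensorProduct

/-- coordinate functionals on the tensor square -/
noncomputable def trigCoord (k : Type*) [Field k]
    (f g : (k × k) →ₗ[k] k) : (k × k) ⊗[k] (k × k) →ₗ[k] k :=
  (TensorProduct.lid k k).toLinearMap ∘ₗ TensorProduct.map f g

lemma trigCoord_tmul (k : Type*) [Field k] (f g : (k × k) →ₗ[k] k)
    (x y : k × k) : trigCoord k f g (x ⊗ₜ y) = f x * g y := by
  simp [trigCoord, TensorProduct.lid_tmul, smul_eq_mul, mul_comm]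

/-- In characteristic 2 the trigonometric coalgebra has exactly one grouplike
element, namely `c + s`. -/
theorem trig_grouplikes_char_two (k : Type*) [Field k] [CharP k 2] :
    {g : k × k | trigComul k g = g ⊗ₜ[k] g ∧ trigCounit k g = 1} =
      {trigC k + trigS k} := by
  ext ⟨a, b⟩
  simp only [Set.mem_setOf_eq, Set.mem_singleton_iff]
  constructor
  · rintro ⟨hΔ, hε⟩
    have ha : a = 1 := by simpa [trigCounit] using hε
    subst ha
    have h22 := congrArg (trigCoord k (LinearMap.snd k k k) (LinearMap.snd k k k)) hΔ
    simp only [trigComul, LinearMap.add_apply, LinearMap.coe_smulRight,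
      LinearMap.fst_apply, LinearMap.snd_apply, map_add, map_sub, map_smul,
      trigCoord_tmul, trigC, trigS, smul_eq_mul] at h22
    -- h22 : 1 * (...) + b * (...) = b * b
    have hb2 : b * b = 1 := by
      have : (1 : k) * (0 * 0 - 1 * 1) + b * (1 * 0 + 0 * 1) = b * b := by
        simpa using h22
      have h : -1 = b * b := by ring_nf at this ⊢; linear_combination this
      have : (1 : k) = b * b := by
        rw [← h, CharTwo.neg_eq]
      exact this.symm
    have hb : b = 1 := by
      have h2 : (2 : k) = 0 := by
        simpa using CharP.cast_eq_zero k 2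
      have hsq : (b - 1) * (b - 1) = 0 := by
        linear_combination hb2 + (1 - b) * h2
      exact sub_eq_zero.mp (mul_self_eq_zero.mp hsq)
    subst hb
    simp [trigC, trigS, Prod.ext_iff]
  · intro h
    rw [h]
    have hnegS : (-trigS k : k × k) = trigS k := by
      simp [trigS, Prod.ext_iff, CharTwo.neg_eq]
    constructor
    · simp only [trigComul, LinearMap.add_apply, LinearMap.coe_smulRight,
        LinearMap.fst_apply, LinearMap.snd_apply, trigC, trigS, Prod.fst_add,
        Prod.snd_add]
      rw [TensorProduct.add_tmul, TensorProduct.tmul_add, TensorProduct.tmul_add]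
      have key : -(((0, 1) : k × k) ⊗ₜ[k] (((0, 1)) : k × k)) = ((0, 1) : k × k) ⊗ₜ[k] (((0, 1)) : k × k) := by
        rw [← TensorProduct.neg_tmul, show (-(0, 1) : k × k) = ((0, 1) : k × k) by
          simpa [trigS] using hnegS]
      simp only [sub_eq_add_neg, key]
      module
    · simp [trigCounit, trigC, trigS]
end

section
/- Let k be a field of characteristic 2 and λ ∈ k. The multiplication on C_k defined by c² = c + λs, cs = sc = λs, s² = (λ+1)s, with unit c + s, makes the trigonometric coalgebra C_k into a bialgebra. -/
open TensorProduct

/-!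
In characteristic 2 the element `g = c + s` of the trigonometric coalgebra is grouplike and `s`
is `(g, g)`-primitive, `Δ s = s ⊗ g + g ⊗ s`: both identities hold up to `2 s ⊗ s`. In the basis
`g, s` the prescribed multiplication is that of `k[x]/(x² - (λ + 1) x)` with unit `g` and `x = s`,
an associative unital algebra in any characteristic. It is a bialgebra because `Δ` is then
multiplicative on the basis: `Δ(s)² = Δ(s²) + 2 s ⊗ s`.
-/

namespace TensorProduct

variable {R V : Type*} [CommSemiring R] [AddCommMonoid V] [Module R V]

theorem map₂_self_unit_tmul_unit_left {mul : V →ₗ[R] V →ₗ[R] V} {e : V}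
    (he : ∀ x, mul e x = x) (t : V ⊗[R] V) : map₂ mul mul (e ⊗ₜ e) t = t := by
  induction t using TensorProduct.induction_on with
  | zero => simp
  | tmul x y => simp [he]
  | add t t' ht ht' => rw [map_add, ht, ht']

theorem map₂_self_unit_tmul_unit_right {mul : V →ₗ[R] V →ₗ[R] V} {e : V}
    (he : ∀ x, mul x e = x) (t : V ⊗[R] V) : map₂ mul mul t (e ⊗ₜ e) = t := by
  induction t using TensorProduct.induction_on with
  | zero => simp
  | tmul x y => simp [he]
  | add t t' ht ht' => rw [map_add, LinearMap.add_apply, ht, ht']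

theorem map₂_self_primitive_primitive {mul : V →ₗ[R] V →ₗ[R] V} {e : V}
    (he_left : ∀ x, mul e x = x) (he_right : ∀ x, mul x e = x) (x : V) :
    map₂ mul mul (x ⊗ₜ e + e ⊗ₜ x) (x ⊗ₜ e + e ⊗ₜ x) =
      mul x x ⊗ₜ e + e ⊗ₜ mul x x + 2 • (x ⊗ₜ x) := by
  simp only [map_add, LinearMap.add_apply, map₂_apply_tmul, map_tmul, he_left, he_right]
  abel

end TensorProduct

section Trig

variable (k : Type*) [Field k]

/-- The multiplication of `k[x]/(x² - (l + 1) x)`, read in the basis `1 = c + s`, `x = s`: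
the vector `(a, b) = a c + b s` is `a + (b - a) x`. -/
noncomputable def trigMul (l : k) : (k × k) →ₗ[k] (k × k) →ₗ[k] (k × k) :=
  LinearMap.mk₂ k
    (fun x y => (x.1 * y.1,
      x.1 * y.2 + x.2 * y.1 - x.1 * y.1 + (l + 1) * (x.2 - x.1) * (y.2 - y.1)))
    (by intros; ext <;> simp <;> ring)
    (by intros; ext <;> simp <;> ring)
    (by intros; ext <;> simp <;> ring)
    (by intros; ext <;> simp <;> ring)

variable {k}

theorem trigMul_apply (l : k) (x y : k × k) :
    trigMul k l x y = (x.1 * y.1,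
      x.1 * y.2 + x.2 * y.1 - x.1 * y.1 + (l + 1) * (x.2 - x.1) * (y.2 - y.1)) := rfl

theorem trigMul_assoc (l : k) (x y z : k × k) :
    trigMul k l (trigMul k l x y) z = trigMul k l x (trigMul k l y z) := by
  ext <;> simp only [trigMul_apply] <;> ring

theorem trigMul_trigC_add_trigS_left (l : k) (x : k × k) : trigMul k l (trigC k + trigS k) x = x := by
  ext <;> simp [trigMul_apply, trigC, trigS]

theorem trigMul_trigC_add_trigS_right (l : k) (x : k × k) : trigMul k l x (trigC k + trigS k) = x := by
  ext <;> simp [trigMul_apply, trigC, trigS]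

theorem trigMul_trigS_trigS (l : k) : trigMul k l (trigS k) (trigS k) = (l + 1) • trigS k := by
  ext <;> simp [trigMul_apply, trigS]

theorem trigMul_trigC_trigC (l : k) : trigMul k l (trigC k) (trigC k) = trigC k + l • trigS k := by
  ext <;> simp [trigMul_apply, trigC, trigS]

theorem linearMap_ext_trig {M : Type*} [AddCommGroup M] [Module k M] {f g : (k × k) →ₗ[k] M}
    (h₁ : f (trigC k + trigS k) = g (trigC k + trigS k)) (hs : f (trigS k) = g (trigS k)) :
    f = g := by
  have hc : trigC k = (trigC k + trigS k) - trigS k := by abel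
  refine LinearMap.prod_ext (LinearMap.ext_ring ?_) (LinearMap.ext_ring ?_)
  · change f (trigC k) = g (trigC k)
    rw [hc, map_sub, map_sub, h₁, hs]
  · exact hs

theorem trigComul_trigC : trigComul k (trigC k) = trigC k ⊗ₜ trigC k - trigS k ⊗ₜ trigS k := by
  simp [trigComul, trigC, trigS]

theorem trigComul_trigS : trigComul k (trigS k) = trigS k ⊗ₜ trigC k + trigC k ⊗ₜ trigS k := by
  simp [trigComul, trigC, trigS]

variable [CharP k 2]

theorem trigComul_trigC_add_trigS :
    trigComul k (trigC k + trigS k) = (trigC k + trigS k) ⊗ₜ (trigC k + trigS k) := by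
  rw [map_add, trigComul_trigC, trigComul_trigS, add_tmul, tmul_add, tmul_add]
  linear_combination (norm := module) (CharTwo.two_eq_zero (R := k)) • -(trigS k ⊗ₜ[k] trigS k)

theorem trigComul_trigS_eq_primitive :
    trigComul k (trigS k) = trigS k ⊗ₜ (trigC k + trigS k) + (trigC k + trigS k) ⊗ₜ trigS k := by
  rw [trigComul_trigS, add_tmul, tmul_add]
  linear_combination (norm := module) (CharTwo.two_eq_zero (R := k)) • -(trigS k ⊗ₜ[k] trigS k)

theorem trigComul_trigMul (l : k) (x y : k × k) :
    trigComul k (trigMul k l x y) =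
      map₂ (trigMul k l) (trigMul k l) (trigComul k x) (trigComul k y) := by
  suffices h : (trigMul k l).compr₂ (trigComul k) =
      (map₂ (trigMul k l) (trigMul k l)).compl₁₂ (trigComul k) (trigComul k) from
    LinearMap.congr_fun₂ h x y
  -- On the basis `c + s, s`: the unit on either side is immediate, and for `s · s` the two
  -- sides differ by `2 s ⊗ s`.
  refine linearMap_ext_trig (LinearMap.ext fun y => ?_) (linearMap_ext_trig ?_ ?_)
  · simp only [LinearMap.compr₂_apply, LinearMap.compl₁₂_apply, trigMul_trigC_add_trigS_left, trigComul_trigC_add_trigS,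
      map₂_self_unit_tmul_unit_left (trigMul_trigC_add_trigS_left l)]
  · simp only [LinearMap.compr₂_apply, LinearMap.compl₁₂_apply, trigMul_trigC_add_trigS_right, trigComul_trigC_add_trigS,
      map₂_self_unit_tmul_unit_right (trigMul_trigC_add_trigS_right l)]
  · rw [LinearMap.compr₂_apply, LinearMap.compl₁₂_apply, trigComul_trigS_eq_primitive,
      map₂_self_primitive_primitive (trigMul_trigC_add_trigS_left l) (trigMul_trigC_add_trigS_right l), trigMul_trigS_trigS,
      map_smul, trigComul_trigS_eq_primitive, ← smul_tmul', tmul_smul]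
    linear_combination (norm := module) (CharTwo.two_eq_zero (R := k)) • -(trigS k ⊗ₜ[k] trigS k)

theorem trigMul_trigC_trigS (l : k) : trigMul k l (trigC k) (trigS k) = l • trigS k := by
  ext
  · simp [trigMul_apply, trigC, trigS]
  · simp only [trigMul_apply, trigC, trigS, Prod.smul_mk, smul_eq_mul]
    linear_combination -l * CharTwo.two_eq_zero (R := k)

theorem trigMul_trigS_trigC (l : k) : trigMul k l (trigS k) (trigC k) = l • trigS k := by
  ext
  · simp [trigMul_apply, trigC, trigS]
  · simp only [trigMul_apply, trigC, trigS, Prod.smul_mk, smul_eq_mul]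
    linear_combination -l * CharTwo.two_eq_zero (R := k)

noncomputable def trigBialgebra (l : k) :
    BialgebraStructure k (k × k) (trigComul k) (trigCounit k) where
  mul := trigMul k l
  one := trigC k + trigS k
  mul_assoc := trigMul_assoc l
  one_mul := trigMul_trigC_add_trigS_left l
  mul_one := trigMul_trigC_add_trigS_right l
  comul_one := trigComul_trigC_add_trigS
  comul_mul := trigComul_trigMul l
  counit_one := by simp [trigCounit, trigC, trigS]
  counit_mul _ _ := rfl

end Trig

/-- In characteristic 2, for every `λ = l ∈ k` the multiplication table
`c² = c + l s`, `cs = sc = l s`, `s² = (l+1) s`, with unit `c + s`, makes the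
trigonometric coalgebra a bialgebra. -/
theorem trig_bialgebra_char_two (k : Type*) [Field k] [CharP k 2] (l : k) :
    ∃ B : BialgebraStructure k (k × k) (trigComul k) (trigCounit k),
      B.mul (trigC k) (trigC k) = trigC k + l • trigS k ∧
      B.mul (trigC k) (trigS k) = l • trigS k ∧
      B.mul (trigS k) (trigC k) = l • trigS k ∧
      B.mul (trigS k) (trigS k) = (l + 1) • trigS k ∧
      B.one = trigC k + trigS k :=
  ⟨trigBialgebra l, trigMul_trigC_trigC l, trigMul_trigC_trigS l, trigMul_trigS_trigC l,
    trigMul_trigS_trigS l, rfl⟩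
end

section
/- If k is a field with no primitive p-th root of unity other than 1 (for p prime), then the circulant coalgebra C_k^p has exactly one grouplike element, namely F_0 + F_1 + ... + F_{p-1}. -/
open TensorProduct

def circF (k : Type*) [Field k] (p : ℕ) (j : ZMod p) : ZMod p → k :=
  Pi.single j 1

noncomputable def circComul (k : Type*) [Field k] (p : ℕ) [NeZero p] :
    (ZMod p → k) →ₗ[k] (ZMod p → k) ⊗[k] (ZMod p → k) :=
  ∑ I : ZMod p, ∑ J : ZMod p,
    (LinearMap.proj (I + J) : (ZMod p → k) →ₗ[k] k).smulRight
      (circF k p I ⊗ₜ[k] circF k p J)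

def circCounit (k : Type*) [Field k] (p : ℕ) [NeZero p] :
    (ZMod p → k) →ₗ[k] k :=
  LinearMap.proj 0

noncomputable def circPhi (k : Type*) [Field k] (p : ℕ) [NeZero p] (a b : ZMod p) :
    (ZMod p → k) ⊗[k] (ZMod p → k) →ₗ[k] k :=
  TensorProduct.lift ((LinearMap.mul k k).compl₁₂ (LinearMap.proj a) (LinearMap.proj b))

lemma circPhi_comul (k : Type*) [Field k] (p : ℕ) [NeZero p] (a b : ZMod p)
    (g : ZMod p → k) : circPhi k p a b (circComul k p g) = g (a + b) := by
  simp [circPhi, circComul, LinearMap.sum_apply, circF, Pi.single_apply, mul_ite, ite_mul]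

/-- If `p` is prime and `1` is the only `p`-th root of unity in `k`, the
circulant coalgebra has exactly one grouplike element, `F_0 + ⋯ + F_{p-1}`. -/
theorem circulant_unique_grouplike (k : Type*) [Field k] (p : ℕ) [Fact p.Prime]
    (hk : ∀ x : k, x ^ p = 1 → x = 1) :
    {g : ZMod p → k | circComul k p g = g ⊗ₜ[k] g ∧ circCounit k p g = 1} =
      {∑ j : ZMod p, circF k p j} := by
  have hsum : (∑ j : ZMod p, circF k p j) = fun _ => (1 : k) := by
    funext a
    simp [circF, Finset.sum_apply, Pi.single_apply]
  ext g
  simp only [Set.mem_setOf_eq, Set.mem_singleton_iff]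
  constructor
  · rintro ⟨h1, h2⟩
    have h0 : g 0 = 1 := h2
    have key : ∀ a b : ZMod p, g (a + b) = g a * g b := by
      intro a b
      have := congrArg (circPhi k p a b) h1
      rw [circPhi_comul] at this
      simpa [circPhi] using this
    have hpow : ∀ n : ℕ, g (n : ZMod p) = g 1 ^ n := by
      intro n
      induction n with
      | zero => simpa using h0
      | succ n ih => push_cast; rw [key, ih, pow_succ]
    have hg1 : g 1 = 1 := by
      apply hk
      have := hpow p
      rwa [ZMod.natCast_self, h0, eq_comm] at this
    have hall : ∀ a : ZMod p, g a = 1 := by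
      intro a
      have : g ((a.val : ℕ) : ZMod p) = g 1 ^ a.val := hpow a.val
      rwa [ZMod.natCast_val, ZMod.cast_id, hg1, one_pow] at this
    rw [hsum]; funext a; exact hall a
  · rintro rfl
    constructor
    · rw [hsum]
      have : ((fun _ => (1:k)) : ZMod p → k) ⊗ₜ[k] (fun _ => (1:k)) =
          (∑ I : ZMod p, circF k p I) ⊗ₜ[k] (∑ J : ZMod p, circF k p J) := by
        rw [hsum]
      rw [this, TensorProduct.sum_tmul]
      simp only [TensorProduct.tmul_sum]
      simp [circComul, LinearMap.sum_apply]
    · rw [hsum]; simp [circCounit]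
end

section
/- Let k be a field of characteristic p, and A = k[t]/(t^p - 1). For each μ ∈ k, setting Δ(t) = μ(ts - t - s + 1) + t + s - 1 (in A ⊗ A ≅ k[s,t]/((s-1)^p,(t-1)^p), where only terms of bidegree ≤ (1,1) appear) and ε(t) = 1 defines a bialgebra structure on A, and every bialgebra structure on A with Δ(t) of the form Ats + Bt + Cs + D arises this way; i.e., such structures are in bijection with k. -/
open TensorProduct Polynomial

/-- A (bialgebra-compatible) coalgebra structure on a fixed commutative
`k`-algebra `A`: algebra homomorphisms `Δ : A → A ⊗ A` and `ε : A → k`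
satisfying coassociativity and counitality.  Equivalently, a bialgebra
structure on `A` with its given multiplication. -/
structure CoalgOnAlg (k A : Type*) [CommRing k] [CommRing A] [Algebra k A] where
  comul : A →ₐ[k] A ⊗[k] A
  counit : A →ₐ[k] k
  coassoc : ∀ a : A,
    (TensorProduct.assoc k A A A)
        (TensorProduct.map comul.toLinearMap LinearMap.id (comul a)) =
      TensorProduct.map LinearMap.id comul.toLinearMap (comul a)
  counit_left : ∀ a : A,
    (TensorProduct.lid k A)
        (TensorProduct.map counit.toLinearMap LinearMap.id (comul a)) = a
  counit_right : ∀ a : A,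
    (TensorProduct.rid k A)
        (TensorProduct.map LinearMap.id counit.toLinearMap (comul a)) = a

/-- The algebra `A = k[t]/(t^p - 1)`. -/
abbrev circAlg (k : Type*) [Field k] (p : ℕ) : Type _ :=
  Polynomial k ⧸ Ideal.span {(X : Polynomial k) ^ p - 1}

/-- The image of `t` in `k[t]/(t^p - 1)`. -/
noncomputable def tGen (k : Type*) [Field k] (p : ℕ) : circAlg k p :=
  Ideal.Quotient.mk _ X

/-!
Put `u = t - 1`. The proposed `Δ(t)` equals `t ⊗ t + (μ - 1) • u ⊗ u`, and in characteristic
`p` its `p`-th power is `t ^ p ⊗ t ^ p + (μ - 1) ^ p • u ^ p ⊗ u ^ p = 1`, because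
`u ^ p = t ^ p - 1 = 0`; so `t ↦ Δ(t)` defines an algebra map. Since `Δ(u) = u ⊗ 1 + 1 ⊗ u + μ • u ⊗ u` is the formal group
law `x + y + μxy`, coassociativity and counitality hold on the generator `u`, hence everywhere.
Conversely, any counit sends `t` to a `p`-th root of unity of `k`, i.e. to `1`, and the two counit
axioms applied to `a • t ⊗ t + b • t ⊗ 1 + c • 1 ⊗ t + d • 1 ⊗ 1` force `b = c = 1 - a` and
`d = a - 1`, as `1` and `t` are linearly independent; `μ = a` is unique because `u ⊗ u ≠ 0`.
-/

theorem TensorProduct.tmul_ne_zero {k V W : Type*} [Field k] [AddCommGroup V] [Module k V]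
    [AddCommGroup W] [Module k W] {v : V} {w : W} (hv : v ≠ 0) (hw : w ≠ 0) :
    v ⊗ₜ[k] w ≠ 0 := by
  obtain ⟨f, hf⟩ := Module.Projective.exists_dual_eq_one k hv
  obtain ⟨g, hg⟩ := Module.Projective.exists_dual_eq_one k hw
  intro h
  simpa [hf, hg] using congr(TensorProduct.lid k k (TensorProduct.map f g $h))

namespace circAlg

variable {k : Type*} [Field k] {p : ℕ}

/- `circAlg k p` is definitionally `AdjoinRoot (X ^ p - 1)`. We work with the latter: on
`circAlg k p ⊗[k] circAlg k p` instance search picks the quotient-module structure, which does not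
unify with the one underlying the tensor product algebra (even `map_one` fails there). -/
local notation "𝔸" => AdjoinRoot ((X : k[X]) ^ p - 1)
local notation "τ" => AdjoinRoot.root ((X : k[X]) ^ p - 1)

theorem root_pow : (τ : 𝔸) ^ p = 1 := by
  have h := AdjoinRoot.mk_self (f := (X : k[X]) ^ p - 1)
  rwa [map_sub, map_pow, map_one, AdjoinRoot.mk_X, sub_eq_zero] at h

theorem algHom_ext_root_sub_one {B : Type*} [Ring B] [Algebra k B] {f g : 𝔸 →ₐ[k] B}
    (h : f (τ - 1) = g (τ - 1)) : f = g :=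
  AdjoinRoot.algHom_ext (by simpa using h)

noncomputable def lift {B : Type*} [CommRing B] [Algebra k B] (x : B) (hx : x ^ p = 1) :
    𝔸 →ₐ[k] B :=
  AdjoinRoot.liftAlgHom _ (Algebra.ofId k B) x (by simp [hx])

@[simp]
theorem lift_root {B : Type*} [CommRing B] [Algebra k B] (x : B) (hx : x ^ p = 1) :
    lift x hx τ = x :=
  AdjoinRoot.liftAlgHom_root ..

theorem linearIndependent_one_root (hp : 1 < p) : LinearIndependent k ![1, (τ : 𝔸)] := by
  have hmonic : ((X : k[X]) ^ p - 1).Monic := by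
    simpa using monic_X_pow_sub_C (1 : k) (by omega : p ≠ 0)
  have hdeg : ((X : k[X]) ^ p - 1).natDegree = p := by
    simpa using natDegree_X_pow_sub_C (n := p) (r := (1 : k))
  let b := (AdjoinRoot.powerBasis' hmonic).basis
  have hdim : 1 < (AdjoinRoot.powerBasis' hmonic).dim := by simpa [hdeg] using hp
  let i : Fin 2 → Fin (AdjoinRoot.powerBasis' hmonic).dim := ![⟨0, by omega⟩, ⟨1, hdim⟩]
  have hi : Function.Injective i := by
    intro a b h; fin_cases a <;> fin_cases b <;> simp_all [i, Fin.ext_iff]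
  have hbi : (b ∘ i : Fin 2 → 𝔸) = ![1, τ] := by
    funext j; fin_cases j <;> simp [b, i]
  exact hbi ▸ b.linearIndependent.comp i hi

theorem root_sub_one_ne_zero (hp : 1 < p) : (τ : 𝔸) - 1 ≠ 0 := by
  intro h
  simpa using LinearIndependent.pair_iff.mp (linearIndependent_one_root (k := k) hp) (-1) 1
    (by simp [← sub_eq_neg_add, h])

noncomputable def comulRoot (μ : k) : 𝔸 ⊗[k] 𝔸 :=
  μ • ((τ - 1) ⊗ₜ[k] (τ - 1)) + (τ ⊗ₜ[k] 1 + 1 ⊗ₜ[k] τ - 1 ⊗ₜ[k] 1)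

theorem comulRoot_eq_tmul_add_smul (μ : k) :
    comulRoot μ = (τ : 𝔸) ⊗ₜ[k] τ + (μ - 1) • ((τ - 1) ⊗ₜ[k] (τ - 1)) := by
  simp only [comulRoot, sub_tmul, tmul_sub]
  module

theorem comulRoot_injective (hp : 1 < p) : Function.Injective (comulRoot (k := k) (p := p)) := by
  intro μ ν h
  have hu := root_sub_one_ne_zero (k := k) hp
  exact smul_left_injective k (tmul_ne_zero hu hu) (add_right_cancel h)

noncomputable def counit : 𝔸 →ₐ[k] k :=
  lift 1 (one_pow p)

theorem counit_root_sub_one : counit ((τ : 𝔸) - 1) = 0 := by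
  simp [counit]

instance [NeZero p] : Nontrivial 𝔸 :=
  AdjoinRoot.nontrivial _ (by
    have h : ((X : k[X]) ^ p - 1).degree = p := by
      simpa using degree_X_pow_sub_C (Nat.pos_of_ne_zero (NeZero.ne p)) (1 : k)
    rw [h]
    exact_mod_cast NeZero.ne p)

section CharP

variable [Fact p.Prime] [CharP k p]

instance : CharP 𝔸 p := (Algebra.charP_iff k 𝔸 p).mp inferInstance

instance : CharP (𝔸 ⊗[k] 𝔸) p := (Algebra.charP_iff k (𝔸 ⊗[k] 𝔸) p).mp inferInstance

theorem root_sub_one_pow : ((τ : 𝔸) - 1) ^ p = 0 := by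
  rw [sub_pow_char, root_pow, one_pow, sub_self]

theorem comulRoot_pow (μ : k) : comulRoot (p := p) μ ^ p = 1 := by
  rw [comulRoot_eq_tmul_add_smul, add_pow_char, _root_.smul_pow, Algebra.TensorProduct.tmul_pow,
    Algebra.TensorProduct.tmul_pow, root_pow, root_sub_one_pow, zero_tmul, smul_zero, add_zero]
  rfl

noncomputable def comul (μ : k) : 𝔸 →ₐ[k] 𝔸 ⊗[k] 𝔸 :=
  lift (comulRoot μ) (comulRoot_pow μ)

theorem comul_root (μ : k) : comul μ τ = comulRoot μ :=
  lift_root ..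

theorem comul_root_sub_one (μ : k) :
    comul μ ((τ : 𝔸) - 1) =
      μ • ((τ - 1) ⊗ₜ[k] (τ - 1)) + ((τ - 1) ⊗ₜ[k] 1 + 1 ⊗ₜ[k] (τ - 1)) := by
  rw [map_sub, map_one, comul_root, comulRoot, Algebra.TensorProduct.one_def]
  simp only [sub_tmul, tmul_sub]
  abel

theorem comul_coassoc (μ : k) :
    (Algebra.TensorProduct.assoc k k k 𝔸 𝔸 𝔸).toAlgHom.comp
      ((Algebra.TensorProduct.map (comul μ) (AlgHom.id k 𝔸)).comp (comul μ)) =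
    (Algebra.TensorProduct.map (AlgHom.id k 𝔸) (comul μ)).comp (comul μ) := by
  apply algHom_ext_root_sub_one
  simp only [AlgHom.coe_comp, AlgEquiv.coe_toAlgHom, Function.comp_apply, comul_root_sub_one,
    map_add, map_smul, Algebra.TensorProduct.map_tmul, AlgHom.coe_id, id_eq, add_tmul, tmul_add,
    ← smul_tmul', tmul_smul, smul_add, map_one, Algebra.TensorProduct.one_def,
    Algebra.TensorProduct.assoc_tmul]
  module

theorem counit_comul_left (μ : k) :
    (Algebra.TensorProduct.lid k 𝔸).toAlgHom.comp
      ((Algebra.TensorProduct.map counit (AlgHom.id k 𝔸)).comp (comul μ)) = AlgHom.id k 𝔸 := by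
  apply algHom_ext_root_sub_one
  simp [comul_root_sub_one, counit_root_sub_one]

theorem counit_comul_right (μ : k) :
    (Algebra.TensorProduct.rid k k 𝔸).toAlgHom.comp
      ((Algebra.TensorProduct.map (AlgHom.id k 𝔸) counit).comp (comul μ)) = AlgHom.id k 𝔸 := by
  apply algHom_ext_root_sub_one
  simp [comul_root_sub_one, counit_root_sub_one]

noncomputable def coalgOnAlg (μ : k) : CoalgOnAlg k 𝔸 where
  comul := comul μ
  counit := counit
  coassoc a := congr($(comul_coassoc μ) a)
  counit_left a := congr($(counit_comul_left μ) a)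
  counit_right a := congr($(counit_comul_right μ) a)

theorem counit_root_eq_one (S : CoalgOnAlg k 𝔸) : S.counit τ = 1 :=
  frobenius_inj k p (by simp [frobenius_def, ← map_pow, root_pow])

end CharP

theorem comul_root_eq_comulRoot (hp : 1 < p) (S : CoalgOnAlg k 𝔸) (hε : S.counit τ = 1)
    {a b c d : k}
    (h : S.comul τ = a • (τ ⊗ₜ[k] τ) + b • (τ ⊗ₜ[k] 1) + c • ((1 : 𝔸) ⊗ₜ[k] τ) +
      d • ((1 : 𝔸) ⊗ₜ[k] (1 : 𝔸))) :
    S.comul τ = comulRoot a := by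
  have hL := S.counit_left τ
  have hR := S.counit_right τ
  rw [h] at hL hR
  simp only [map_add, map_smul, TensorProduct.map_tmul, LinearMap.id_coe, id_eq,
    AlgHom.toLinearMap_apply, hε, map_one, TensorProduct.lid_tmul, TensorProduct.rid_tmul,
    one_smul] at hL hR
  have hli := linearIndependent_one_root (k := k) hp
  obtain ⟨hbd, hac⟩ := hli.eq_of_pair (s := b + d) (t := a + c) (s' := 0) (t' := 1)
    (by linear_combination (norm := module) hL)
  obtain ⟨-, hab⟩ := hli.eq_of_pair (s := c + d) (t := a + b) (s' := 0) (t' := 1)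
    (by linear_combination (norm := module) hR)
  rw [h, comulRoot]
  simp only [sub_tmul, tmul_sub]
  linear_combination (norm := module) hab • ((τ : 𝔸) ⊗ₜ[k] (1 : 𝔸)) + hac • ((1 : 𝔸) ⊗ₜ[k] τ) +
    hbd • ((1 : 𝔸) ⊗ₜ[k] (1 : 𝔸)) - hab • ((1 : 𝔸) ⊗ₜ[k] (1 : 𝔸))

end circAlg

/-- In characteristic `p`, on `A = k[t]/(t^p - 1)` the assignment
`Δ(t) = μ(t-1)⊗(t-1) + t⊗1 + 1⊗t - 1⊗1` defines a bialgebra structure for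
every `μ ∈ k`, every bialgebra structure with `Δ(t) = A t⊗t + B t⊗1 + C 1⊗t
+ D 1⊗1` arises this way, and the `μ` is unique: such bialgebra structures
are in bijection with elements of `k`. -/
theorem bialgebra_structures_char_p (k : Type*) [Field k] (p : ℕ) [Fact p.Prime]
    [CharP k p] :
    (∀ μ : k,
      ∃ S : CoalgOnAlg k (circAlg k p),
        S.comul (tGen k p) =
          μ • ((tGen k p - 1) ⊗ₜ[k] (tGen k p - 1)) +
            (tGen k p ⊗ₜ[k] 1 + 1 ⊗ₜ[k] tGen k p - 1 ⊗ₜ[k] 1)) ∧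
    (∀ S : CoalgOnAlg k (circAlg k p), ∀ a b c d : k,
        S.comul (tGen k p) =
            a • (tGen k p ⊗ₜ[k] tGen k p) + b • (tGen k p ⊗ₜ[k] 1) +
              c • ((1 : circAlg k p) ⊗ₜ[k] tGen k p) +
              d • ((1 : circAlg k p) ⊗ₜ[k] (1 : circAlg k p)) →
        ∃! μ : k,
          S.comul (tGen k p) =
            μ • ((tGen k p - 1) ⊗ₜ[k] (tGen k p - 1)) +
              (tGen k p ⊗ₜ[k] 1 + 1 ⊗ₜ[k] tGen k p - 1 ⊗ₜ[k] 1)) := by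
  have hp : 1 < p := (Fact.out : p.Prime).one_lt
  refine ⟨fun μ => ⟨circAlg.coalgOnAlg μ, circAlg.comul_root μ⟩, fun S a b c d h => ?_⟩
  have hS := circAlg.comul_root_eq_comulRoot hp S (circAlg.counit_root_eq_one S) h
  exact ⟨a, hS, fun μ hμ => circAlg.comulRoot_injective hp (hμ.symm.trans hS)⟩
end
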